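/- Let G be an Eulerian digraph in which every node has in-degree 2 and out-degree 2, let P be the 0/1-circulation polytope of G, let 0 ∈ P be the zero flow and 1 ∈ P the full flow. Then the minimum of Σ_{i=1}^r ‖λ_i g_i‖_∞ over all circuit walks ((g_1,λ_1),…,(g_r,λ_r)) from 0 to 1 equals 2 if and only if G decomposes into two simple Hamiltonian dicycles. -/

import Mathlib

open Matrix

/-- `g` is a circuit of the polyhedron `{x : A x = b, B x ≤ d}` with respect to the
description `(A, B)`: a nonzero element of `ker A` with coprime integral components such that
`B g` is support-minimal among `{B x : x ∈ ker A, x ≠ 0}`. -/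
def IsCircuit {mA mB n : Type*} [Fintype n]
    (A : Matrix mA n ℝ) (B : Matrix mB n ℝ) (g : n → ℝ) : Prop :=
  A.mulVec g = 0 ∧ g ≠ 0 ∧
  (∃ z : n → ℤ, (∀ i, (z i : ℝ) = g i) ∧ Finset.univ.gcd z = 1) ∧
  ∀ x : n → ℝ, A.mulVec x = 0 → x ≠ 0 →
    ¬ (Function.support (B.mulVec x) ⊂ Function.support (B.mulVec g))

/-- Membership in the polyhedron `{x : A x = b, B x ≤ d}`. -/
def InPoly {mA mB n : Type*} [Fintype n] (A : Matrix mA n ℝ) (b : mA → ℝ)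
    (B : Matrix mB n ℝ) (d : mB → ℝ) (x : n → ℝ) : Prop :=
  A.mulVec x = b ∧ B.mulVec x ≤ d

/-- `((g 0, lam 0), …, (g (r-1), lam (r-1)))` is a (maximal) circuit walk from `x` to `y`
in the polyhedron `{x : A x = b, B x ≤ d}`. -/
def IsCircuitWalk {mA mB n : Type*} [Fintype n]
    (A : Matrix mA n ℝ) (b : mA → ℝ) (B : Matrix mB n ℝ) (d : mB → ℝ)
    (x y : n → ℝ) (r : ℕ) (g : Fin r → n → ℝ) (lam : Fin r → ℝ) : Prop :=
  (∀ i, IsCircuit A B (g i)) ∧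
  (∀ i, 0 < lam i) ∧
  (∀ k : Fin r, InPoly A b B d (x + ∑ i ∈ Finset.univ.filter (fun i => i ≤ k), lam i • g i)) ∧
  (x + ∑ i, lam i • g i = y) ∧
  (∀ k : Fin r, ∀ mu : ℝ, lam k < mu →
    ¬ InPoly A b B d ((x + ∑ i ∈ Finset.univ.filter (fun i => i < k), lam i • g i) + mu • g k))

/-- `u` and `u'` are sign-compatible with respect to `B`. -/
def SignCompat {mB n : Type*} [Fintype n] (B : Matrix mB n ℝ) (u u' : n → ℝ) : Prop :=
  ∀ i, 0 ≤ B.mulVec u i * B.mulVec u' i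

/-- Sign-compatible circuit decomposition of the vector `u` with respect to `(A, B)`. -/
def IsSCDecomp {mA mB n : Type*} [Fintype n]
    (A : Matrix mA n ℝ) (B : Matrix mB n ℝ) (u : n → ℝ)
    (r : ℕ) (g : Fin r → n → ℝ) (lam : Fin r → ℝ) : Prop :=
  (∀ i, IsCircuit A B (g i)) ∧ (∀ i, 0 < lam i) ∧ (∑ i, lam i • g i = u) ∧
  ∀ i j, SignCompat B (g i) (g j)

/-- A loopless digraph with node type `N` and arc type `α`. -/
structure Digraph' (N α : Type*) where
  src : α → N
  dst : α → N
  loopless : ∀ a, src a ≠ dst a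

/-- The node-arc incidence matrix of a digraph. -/
def incMat {N α : Type*} [DecidableEq N] (G : Digraph' N α) : Matrix N α ℝ :=
  Matrix.of fun v a => if G.src a = v then 1 else if G.dst a = v then -1 else 0

/-- The inequality system `x ≤ 1`-style box constraints: rows of the identity followed by
rows of the negative identity. -/
def boxB (α : Type*) [DecidableEq α] : Matrix (α ⊕ α) α ℝ :=
  Matrix.fromRows 1 (-1)

/-- Right-hand side for the box constraints `x ≤ 1`, `-x ≤ 0` of the 0/1-circulation polytope. -/
def boxd (α : Type*) : α ⊕ α → ℝ := Sum.elim (fun _ => 1) (fun _ => 0)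

/-- In-degree of a node. -/
def inDeg {N α : Type*} [Fintype α] [DecidableEq N] (G : Digraph' N α) (v : N) : ℕ :=
  (Finset.univ.filter fun a => G.dst a = v).card

/-- Out-degree of a node. -/
def outDeg {N α : Type*} [Fintype α] [DecidableEq N] (G : Digraph' N α) (v : N) : ℕ :=
  (Finset.univ.filter fun a => G.src a = v).card

/-- `S` is the arc set of a simple dicycle of `G` (a directed cycle with no repeated nodes). -/
def IsSimpleDicycle {N α : Type*} (G : Digraph' N α) (S : Set α) : Prop :=
  ∃ (k : ℕ) (e : Fin (k+1) → α) (v : Fin (k+1) → N),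
    Function.Injective e ∧ Function.Injective v ∧ S = Set.range e ∧
    ∀ i, G.src (e i) = v i ∧ G.dst (e i) = v (i + 1)

/-- `S` is the arc set of a simple Hamiltonian dicycle of `G`. -/
def IsHamiltonianDicycle {N α : Type*} (G : Digraph' N α) (S : Set α) : Prop :=
  ∃ (k : ℕ) (e : Fin (k+1) → α) (v : Fin (k+1) → N),
    Function.Injective e ∧ Function.Bijective v ∧ S = Set.range e ∧
    ∀ i, G.src (e i) = v i ∧ G.dst (e i) = v (i + 1)

/-- `G` decomposes into two simple Hamiltonian dicycles. -/
def DecompTwoHamiltonian {N α : Type*} (G : Digraph' N α) : Prop :=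
  ∃ S₁ S₂ : Set α, IsHamiltonianDicycle G S₁ ∧ IsHamiltonianDicycle G S₂ ∧
    Disjoint S₁ S₂ ∧ S₁ ∪ S₂ = Set.univ

/-!
Circuits of the 0/1-circulation polytope are the signed incidence vectors of the cycles of the
underlying undirected graph: a nonzero circulation flows consistently around some cycle,
support-minimality confines a circuit to that cycle, flow conservation makes its absolute values
constant there, and coprimality makes them `1`. So every circuit has sup-norm `1` and arc sum at
most `|N|`, with equality exactly for Hamiltonian dicycles.

The cost of a circuit walk from `0` to `1` is therefore `∑ λᵢ`, and summing `∑ λᵢ gᵢ = 1` over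
the `2|N|` arcs gives `2|N| = ∑ λᵢ ∑ₐ gᵢ a ≤ |N| ∑ λᵢ`: the cost is at least `2`. Cost `2` forces
every step to be a Hamiltonian dicycle; maximality of the first step forces `λ₀ = 1`, so the
second dicycle avoids the first and, having `|N|` of the `2|N|` arcs, is its complement.
Conversely, two complementary Hamiltonian dicycles, each used with step length `1`, form a walk
of cost `2`.
-/

open Function Finset

theorem Fin.apply_eq_apply_zero_of_forall_apply_add_one {β : Type*} {k : ℕ}
    {f : Fin (k + 1) → β} (h : ∀ i, f (i + 1) = f i) (i : Fin (k + 1)) : f i = f 0 := by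
  induction i using Fin.induction with
  | zero => rfl
  | succ i ih => rw [← Fin.coeSucc_eq_succ, h, ih]

theorem Function.exists_cycle {X : Type*} [Finite X] [Nonempty X] (f : X → X) :
    ∃ (k : ℕ) (u : Fin (k + 1) → X), Injective u ∧ ∀ i, u (i + 1) = f (u i) := by
  obtain ⟨x⟩ := ‹Nonempty X›
  obtain ⟨m, n, hmn, hne⟩ : ∃ m n, f^[m] x = f^[n] x ∧ m ≠ n := by
    simpa [Injective] using not_injective_infinite_finite (f^[·] x)
  wlog hlt : m < n generalizing m n
  · exact this n m hmn.symm hne.symm (by omega)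
  set y := f^[m] x
  have hper : y ∈ periodicPts f := by
    refine mk_mem_periodicPts (Nat.sub_pos_of_lt hlt) ?_
    rw [IsPeriodicPt, IsFixedPt, ← iterate_add_apply, Nat.sub_add_cancel hlt.le, hmn]
  obtain ⟨k, hk⟩ := Nat.exists_eq_add_one.mpr (minimalPeriod_pos_of_mem_periodicPts hper)
  have hy : IsPeriodicPt f (k + 1) y := hk ▸ isPeriodicPt_minimalPeriod f y
  refine ⟨k, fun i => f^[i] y, fun i j hij => Fin.ext ?_, fun i => ?_⟩
  · exact iterate_injOn_Iio_minimalPeriod (by simp [hk, i.isLt]) (by simp [hk, j.isLt]) hij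
  · dsimp only
    rw [Fin.val_add, Fin.val_one', Nat.add_mod_mod, hy.iterate_mod_apply, iterate_succ_apply']

theorem exists_intCast_gcd_eq_one {α : Type*} [Fintype α] {x : α → ℝ}
    (hint : ∀ b, ∃ n : ℤ, x b = n) {b₀ : α} (hb₀ : |x b₀| = 1) :
    ∃ z : α → ℤ, (∀ b, (z b : ℝ) = x b) ∧ Finset.univ.gcd z = 1 := by
  choose z hz using hint
  refine ⟨z, fun b => (hz b).symm, ?_⟩
  have hunit : IsUnit (z b₀) := Int.isUnit_iff_abs_eq.mpr (by exact_mod_cast hz b₀ ▸ hb₀)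
  rw [← Finset.normalize_gcd, normalize_eq_one]
  exact isUnit_of_dvd_unit (Finset.gcd_dvd (mem_univ b₀)) hunit

theorem disjoint_of_sum_smul_indicator_eq_one {ι α : Type*} [Fintype ι] {S : ι → Set α}
    {lam : ι → ℝ} (hlam : ∀ i, 0 ≤ lam i) (h : ∑ i, lam i • (S i).indicator (1 : α → ℝ) = 1)
    {i j : ι} (hij : i ≠ j) (hlt : 1 < lam i + lam j) : Disjoint (S i) (S j) := by
  refine Set.disjoint_left.2 fun a hi hj => hlt.not_ge ?_
  calc lam i + lam j = lam i * (S i).indicator 1 a + lam j * (S j).indicator 1 a := by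
        simp [hi, hj]
    _ ≤ ∑ l, lam l * (S l).indicator 1 a :=
        add_le_sum (fun l _ => mul_nonneg (hlam l) (Set.indicator_nonneg (by simp) a))
          (mem_univ i) (mem_univ j) hij
    _ = 1 := by simpa [Finset.sum_apply] using congrFun h a

section CircuitWalk

variable {mA mB n : Type*} [Fintype n] {A : Matrix mA n ℝ} {b : mA → ℝ} {B : Matrix mB n ℝ}
  {d : mB → ℝ} {x y : n → ℝ}

theorem IsCircuitWalk.sum_smul_eq {r : ℕ} {g : Fin r → n → ℝ} {lam : Fin r → ℝ}
    (hw : IsCircuitWalk A b B d x y r g lam) : ∑ i, lam i • g i = y - x :=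
  eq_sub_of_add_eq' hw.2.2.2.1

theorem IsCircuitWalk.inPoly_first {r : ℕ} {g : Fin (r + 1) → n → ℝ} {lam : Fin (r + 1) → ℝ}
    (hw : IsCircuitWalk A b B d x y (r + 1) g lam) : InPoly A b B d (x + lam 0 • g 0) := by
  simpa [filter_eq'] using hw.2.2.1 0

theorem IsCircuitWalk.not_inPoly_first {r : ℕ} {g : Fin (r + 1) → n → ℝ}
    {lam : Fin (r + 1) → ℝ} (hw : IsCircuitWalk A b B d x y (r + 1) g lam) {μ : ℝ}
    (h : lam 0 < μ) : ¬ InPoly A b B d (x + μ • g 0) := by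
  simpa using hw.2.2.2.2 0 μ h

theorem isCircuitWalk_two {g₀ g₁ : n → ℝ} {l₀ l₁ : ℝ} (hg₀ : IsCircuit A B g₀)
    (hg₁ : IsCircuit A B g₁) (hl₀ : 0 < l₀) (hl₁ : 0 < l₁)
    (h₀ : InPoly A b B d (x + l₀ • g₀)) (h₁ : InPoly A b B d (x + l₀ • g₀ + l₁ • g₁))
    (hy : x + l₀ • g₀ + l₁ • g₁ = y)
    (hmax₀ : ∀ μ, l₀ < μ → ¬ InPoly A b B d (x + μ • g₀))
    (hmax₁ : ∀ μ, l₁ < μ → ¬ InPoly A b B d (x + l₀ • g₀ + μ • g₁)) :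
    IsCircuitWalk A b B d x y 2 ![g₀, g₁] ![l₀, l₁] := by
  have hle : univ.filter (fun i : Fin 2 => i ≤ 1) = univ :=
    filter_true_of_mem fun i _ => Fin.le_last i
  refine ⟨Fin.forall_fin_two.2 ⟨hg₀, hg₁⟩, Fin.forall_fin_two.2 ⟨hl₀, hl₁⟩,
    Fin.forall_fin_two.2 ⟨?_, ?_⟩, ?_, Fin.forall_fin_two.2 ⟨?_, ?_⟩⟩
  · simpa [filter_eq'] using h₀
  · simpa [hle, Fin.sum_univ_two, add_assoc] using h₁
  · simpa [Fin.sum_univ_two, add_assoc] using hy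
  · simpa using hmax₀
  · simpa [filter_eq'] using hmax₁

end CircuitWalk

section Digraph

variable {N α : Type*} {G : Digraph' N α}

theorem IsHamiltonianDicycle.isSimpleDicycle {S : Set α} (hS : IsHamiltonianDicycle G S) :
    IsSimpleDicycle G S :=
  let ⟨k, e, v, he, hv, hSe, hstep⟩ := hS
  ⟨k, e, v, he, hv.1, hSe, hstep⟩

theorem IsHamiltonianDicycle.nonempty {S : Set α} (hS : IsHamiltonianDicycle G S) :
    S.Nonempty :=
  let ⟨_, e, _, _, _, hSe, _⟩ := hS
  ⟨e 0, hSe ▸ Set.mem_range_self 0⟩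

theorem IsHamiltonianDicycle.ncard_eq [Fintype N] {S : Set α} (hS : IsHamiltonianDicycle G S) :
    S.ncard = Fintype.card N := by
  obtain ⟨k, e, v, he, hv, rfl, -⟩ := hS
  rw [Set.ncard_range_of_injective he, Nat.card_eq_fintype_card]
  exact Fintype.card_of_bijective hv

theorem sum_outDeg [Fintype N] [Fintype α] [DecidableEq N] (G : Digraph' N α) :
    ∑ v, outDeg G v = Fintype.card α :=
  (card_eq_sum_card_fiberwise fun a _ => mem_univ (G.src a)).symm

variable (G) in
structure IsOrientedCycle {k : ℕ} (e : Fin (k + 1) → α) (v : Fin (k + 1) → N)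
    (σ : Fin (k + 1) → ℝ) : Prop where
  injective_arc : Injective e
  injective_node : Injective v
  step : ∀ i, (σ i = 1 ∧ G.src (e i) = v i ∧ G.dst (e i) = v (i + 1)) ∨
    (σ i = -1 ∧ G.src (e i) = v (i + 1) ∧ G.dst (e i) = v i)

namespace IsOrientedCycle

variable {k : ℕ} {e : Fin (k + 1) → α} {v : Fin (k + 1) → N} {σ : Fin (k + 1) → ℝ}

theorem sign_eq_one_or (hC : IsOrientedCycle G e v σ) (i : Fin (k + 1)) : σ i = 1 ∨ σ i = -1 :=
  (hC.step i).imp (·.1) (·.1)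

theorem sign_mul_self (hC : IsOrientedCycle G e v σ) (i : Fin (k + 1)) : σ i * σ i = 1 := by
  rcases hC.sign_eq_one_or i with h | h <;> simp [h]

theorem card_le [Fintype N] (hC : IsOrientedCycle G e v σ) : k + 1 ≤ Fintype.card N := by
  simpa using Fintype.card_le_of_injective v hC.injective_node

theorem sum_sign_le_card [Fintype N] (hC : IsOrientedCycle G e v σ) :
    ∑ i, σ i ≤ Fintype.card N :=
  calc ∑ i, σ i ≤ ∑ _i : Fin (k + 1), (1 : ℝ) :=
        sum_le_sum fun i _ => by rcases hC.sign_eq_one_or i with h | h <;> simp [h]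
    _ ≤ Fintype.card N := by simpa using (Nat.cast_le (α := ℝ)).2 hC.card_le

theorem isHamiltonianDicycle_of_sum_sign_eq_card [Fintype N] (hC : IsOrientedCycle G e v σ)
    (h : ∑ i, σ i = Fintype.card N) : (∀ i, σ i = 1) ∧ IsHamiltonianDicycle G (Set.range e) := by
  have hle : ∀ i ∈ univ, 0 ≤ 1 - σ i := fun i _ => by
    rcases hC.sign_eq_one_or i with h | h <;> simp [h]
  have hcard : (k + 1 : ℝ) ≤ Fintype.card N := by exact_mod_cast hC.card_le
  have hsum : ∑ i, (1 - σ i) = 0 :=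
    le_antisymm (by simp [sum_sub_distrib, h, hcard]) (sum_nonneg hle)
  have hone : ∀ i, σ i = 1 := fun i =>
    (sub_eq_zero.mp ((sum_eq_zero_iff_of_nonneg hle).mp hsum i (mem_univ i))).symm
  have hv : Bijective v := by
    refine (Fintype.bijective_iff_injective_and_card v).mpr ⟨hC.injective_node, ?_⟩
    rw [Fintype.card_fin]
    exact_mod_cast (by simpa [hone] using h : (k : ℝ) + 1 = Fintype.card N)
  refine ⟨hone, k, e, v, hC.injective_arc, hv, rfl, fun i => ?_⟩
  rcases hC.step i with ⟨-, hs, hd⟩ | ⟨hσ, -⟩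
  · exact ⟨hs, hd⟩
  · norm_num [hone i] at hσ

end IsOrientedCycle

variable [DecidableEq N]

theorem incMat_apply (G : Digraph' N α) (w : N) (a : α) :
    incMat G w a = (if G.src a = w then 1 else 0) - (if G.dst a = w then 1 else 0) := by
  have := G.loopless a
  simp only [incMat, of_apply]
  split_ifs <;> simp_all

theorem IsOrientedCycle.incMat_apply_arc {k : ℕ} {e : Fin (k + 1) → α} {v : Fin (k + 1) → N}
    {σ : Fin (k + 1) → ℝ} (hC : IsOrientedCycle G e v σ) (i : Fin (k + 1)) (w : N) :
    incMat G w (e i) =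
      σ i * ((if v i = w then 1 else 0) - (if v (i + 1) = w then 1 else 0)) := by
  rw [incMat_apply]
  rcases hC.step i with ⟨h, hs, hd⟩ | ⟨h, hs, hd⟩ <;> simp only [h, hs, hd] <;> ring

variable [Fintype α]

theorem incMat_mulVec_one (hG : ∀ v, inDeg G v = outDeg G v) : incMat G *ᵥ 1 = 0 := by
  funext w
  have hw := hG w
  simp only [inDeg, outDeg] at hw
  simp [mulVec, dotProduct, incMat_apply, sum_sub_distrib, sum_boole, hw]

namespace IsOrientedCycle

variable {k : ℕ} {e : Fin (k + 1) → α} {v : Fin (k + 1) → N} {σ : Fin (k + 1) → ℝ}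

theorem mulVec_apply (hC : IsOrientedCycle G e v σ) {x : α → ℝ}
    (hx : ∀ b ∉ Set.range e, x b = 0) (w : N) :
    (incMat G *ᵥ x) w = ∑ i, σ i * x (e i) *
      ((if v i = w then 1 else 0) - (if v (i + 1) = w then 1 else 0)) := by
  refine (Fintype.sum_of_injective e hC.injective_arc _ _ (fun b hb => ?_) fun i => ?_).symm
  · simp [hx b hb]
  · dsimp only
    rw [hC.incMat_apply_arc]
    ring

theorem mulVec_eq_zero_iff (hC : IsOrientedCycle G e v σ) {x : α → ℝ}
    (hx : ∀ b ∉ Set.range e, x b = 0) :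
    incMat G *ᵥ x = 0 ↔ ∀ i, σ i * x (e i) = σ 0 * x (e 0) := by
  simp only [funext_iff, hC.mulVec_apply hx, Pi.zero_apply, mul_sub, mul_ite, mul_one, mul_zero,
    sum_sub_distrib, sub_eq_zero]
  constructor
  · intro h
    refine Fin.apply_eq_apply_zero_of_forall_apply_add_one fun i => ?_
    simpa [hC.injective_node.eq_iff] using h (v (i + 1))
  · intro h w
    simp only [h]
    exact (Fintype.sum_equiv (Equiv.addRight 1) _ _ fun _ => rfl).symm

end IsOrientedCycle

noncomputable def flowTail (G : Digraph' N α) (g : α → ℝ) (a : α) : N :=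
  if 0 < g a then G.src a else G.dst a

noncomputable def flowHead (G : Digraph' N α) (g : α → ℝ) (a : α) : N :=
  if 0 < g a then G.dst a else G.src a

theorem exists_flowTail_eq_flowHead {g : α → ℝ} (hg : incMat G *ᵥ g = 0) {a : α}
    (ha : g a ≠ 0) : ∃ b, g b ≠ 0 ∧ flowTail G g b = flowHead G g a := by
  have hsum : ∑ b, incMat G (flowHead G g a) b * g b = 0 := congrFun hg _
  have hterm : incMat G (flowHead G g a) a * g a ≠ 0 := by
    have := G.loopless a
    rw [incMat_apply, flowHead]
    split_ifs <;> simp_all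
  obtain ⟨b, -, hb⟩ := exists_pos_of_sum_zero_of_exists_nonzero _ hsum ⟨a, mem_univ a, hterm⟩
  refine ⟨b, fun h => by simp [h] at hb, ?_⟩
  rw [incMat_apply] at hb
  rw [flowTail]
  split_ifs at hb ⊢ <;> first | assumption | linarith

theorem exists_isOrientedCycle_of_mulVec_eq_zero {g : α → ℝ} (hg : incMat G *ᵥ g = 0)
    (hne : g ≠ 0) : ∃ (k : ℕ) (e : Fin (k + 1) → α) (v : Fin (k + 1) → N) (σ : Fin (k + 1) → ℝ),
      IsOrientedCycle G e v σ ∧ ∀ i, 0 < σ i * g (e i) := by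
  obtain ⟨a₀, ha₀⟩ := Function.ne_iff.mp hne
  -- Following the flow out of each node it enters is a self-map of the finite set of flow tails.
  let W := Set.range fun a : {a // g a ≠ 0} => flowTail G g a
  have hout : ∀ w : W, ∃ a, g a ≠ 0 ∧ flowTail G g a = w := fun ⟨_, ⟨a, ha⟩, h⟩ => ⟨a, ha, h⟩
  choose out hout_ne hout_tail using hout
  have : Nonempty W := ⟨⟨_, ⟨a₀, ha₀⟩, rfl⟩⟩
  obtain ⟨k, u, hu, hstep⟩ := exists_cycle fun w : W =>
    (⟨flowHead G g (out w), (exists_flowTail_eq_flowHead hg (hout_ne w)).elim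
      fun b hb => ⟨⟨b, hb.1⟩, hb.2⟩⟩ : W)
  have hhead : ∀ i, flowHead G g (out (u i)) = u (i + 1) := fun i => by rw [hstep]
  refine ⟨k, fun i => out (u i), fun i => u i, fun i => if 0 < g (out (u i)) then 1 else -1,
    ⟨fun i j hij => hu (Subtype.ext ?_), Subtype.val_injective.comp hu, fun i => ?_⟩, fun i => ?_⟩
  · rw [← hout_tail, ← hout_tail]
    exact congrArg _ hij
  · have h1 := hout_tail (u i)
    have h2 := hhead i
    simp only [flowTail, flowHead] at h1 h2 ⊢
    split_ifs at h1 h2 ⊢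
    · exact Or.inl ⟨rfl, h1, h2⟩
    · exact Or.inr ⟨rfl, h2, h1⟩
  · rcases (hout_ne (u i)).lt_or_gt with h | h <;> simp [h, h.not_gt]

variable [DecidableEq α]

theorem boxB_mulVec (x : α → ℝ) : boxB α *ᵥ x = Sum.elim x (-x) := by
  rw [boxB, fromRows_mulVec, one_mulVec, neg_mulVec, one_mulVec]

theorem support_boxB_mulVec_subset_iff {x y : α → ℝ} :
    support (boxB α *ᵥ x) ⊆ support (boxB α *ᵥ y) ↔ support x ⊆ support y := by
  simp only [boxB_mulVec, Set.subset_def, Sum.forall, mem_support, Sum.elim_inl, Sum.elim_inr,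
    Pi.neg_apply, neg_ne_zero, and_self]

theorem support_boxB_mulVec_ssubset_iff {x y : α → ℝ} :
    support (boxB α *ᵥ x) ⊂ support (boxB α *ᵥ y) ↔ support x ⊂ support y := by
  simp only [ssubset_iff_subset_not_subset, support_boxB_mulVec_subset_iff]

theorem inPoly_circulation_iff {x : α → ℝ} :
    InPoly (incMat G) 0 (boxB α) (boxd α) x ↔ incMat G *ᵥ x = 0 ∧ ∀ a, 0 ≤ x a ∧ x a ≤ 1 := by
  simp only [InPoly, boxB_mulVec, Pi.le_def, Sum.forall, Sum.elim_inl, Sum.elim_inr, boxd,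
    Pi.neg_apply, neg_nonpos, forall_and, and_comm]

theorem inPoly_indicator {S : Set α} (hS : incMat G *ᵥ S.indicator 1 = 0) :
    InPoly (incMat G) 0 (boxB α) (boxd α) (S.indicator 1) :=
  inPoly_circulation_iff.2 ⟨hS, fun a => by by_cases ha : a ∈ S <;> simp [ha]⟩

theorem not_inPoly_of_one_lt {x : α → ℝ} {a : α} (ha : 1 < x a) :
    ¬ InPoly (incMat G) 0 (boxB α) (boxd α) x :=
  fun hx => ha.not_ge ((inPoly_circulation_iff.1 hx).2 a).2

theorem IsOrientedCycle.isCircuit {k : ℕ} {e : Fin (k + 1) → α} {v : Fin (k + 1) → N}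
    {σ : Fin (k + 1) → ℝ} (hC : IsOrientedCycle G e v σ) {x : α → ℝ}
    (hx : ∀ b ∉ Set.range e, x b = 0) (hxe : ∀ i, x (e i) = σ i) :
    IsCircuit (incMat G) (boxB α) x := by
  have hxe0 : x (e 0) ≠ 0 := by rcases hC.sign_eq_one_or 0 with h | h <;> simp [hxe, h]
  refine ⟨(hC.mulVec_eq_zero_iff hx).2 fun i => by simp [hxe, hC.sign_mul_self],
    fun h => hxe0 (by simp [h]), exists_intCast_gcd_eq_one (fun b => ?_) (b₀ := e 0) ?_,
    fun y hy hy0 hsub => hy0 ?_⟩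
  · by_cases hb : b ∈ Set.range e
    · obtain ⟨i, rfl⟩ := hb
      rcases hC.sign_eq_one_or i with h | h
      exacts [⟨1, by simp [hxe, h]⟩, ⟨-1, by simp [hxe, h]⟩]
    · exact ⟨0, by simp [hx b hb]⟩
  · rcases hC.sign_eq_one_or 0 with h | h <;> simp [hxe, h]
  rw [support_boxB_mulVec_ssubset_iff] at hsub
  have hysupp : ∀ b ∉ Set.range e, y b = 0 := fun b hb =>
    not_not.mp fun hyb => hsub.1 hyb (hx b hb)
  obtain ⟨b, hbx, hby⟩ := Set.exists_of_ssubset hsub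
  obtain ⟨m, rfl⟩ : b ∈ Set.range e := by_contra fun hb => hbx (hx b hb)
  have hconst := (hC.mulVec_eq_zero_iff hysupp).1 hy
  have hzero : σ 0 * y (e 0) = 0 := by rw [← hconst m, notMem_support.mp hby, mul_zero]
  funext b
  by_cases hb : b ∈ Set.range e
  · obtain ⟨i, rfl⟩ := hb
    have h := hconst i
    rw [hzero] at h
    exact (mul_eq_zero.mp h).resolve_left (left_ne_zero_of_mul_eq_one (hC.sign_mul_self i))
  · exact hysupp b hb

theorem IsSimpleDicycle.isCircuit_indicator {S : Set α} (hS : IsSimpleDicycle G S) :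
    IsCircuit (incMat G) (boxB α) (S.indicator 1) := by
  obtain ⟨k, e, v, he, hv, rfl, hstep⟩ := hS
  have hC : IsOrientedCycle G e v 1 := ⟨he, hv, fun i => Or.inl ⟨rfl, hstep i⟩⟩
  exact hC.isCircuit (fun b hb => Set.indicator_of_notMem hb _)
    fun i => Set.indicator_of_mem (Set.mem_range_self i) _

namespace IsCircuit

variable {g : α → ℝ} {k : ℕ} {e : Fin (k + 1) → α} {v : Fin (k + 1) → N} {σ : Fin (k + 1) → ℝ}

theorem eq_zero_of_notMem_range (hg : IsCircuit (incMat G) (boxB α) g)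
    (hC : IsOrientedCycle G e v σ) (hge : ∀ i, g (e i) ≠ 0) : ∀ b ∉ Set.range e, g b = 0 := by
  by_contra! ⟨b, hb, hgb⟩
  have hx := hC.isCircuit (x := extend e σ 0) (fun b hb => extend_apply' _ _ _ hb)
    (hC.injective_arc.extend_apply σ 0)
  refine hg.2.2.2 _ hx.1 hx.2.1 (support_boxB_mulVec_ssubset_iff.2 ?_)
  refine (Set.ssubset_iff_of_subset fun a ha => ?_).2 ⟨b, hgb, fun h => h (extend_apply' _ _ _ hb)⟩
  by_cases ha' : a ∈ Set.range e
  · obtain ⟨i, rfl⟩ := ha'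
    exact hge i
  · exact absurd (extend_apply' _ _ _ ha') ha

theorem apply_eq_sign (hg : IsCircuit (incMat G) (boxB α) g) (hC : IsOrientedCycle G e v σ)
    (hsupp : ∀ b ∉ Set.range e, g b = 0) (hpos : ∀ i, 0 < σ i * g (e i)) :
    ∀ i, g (e i) = σ i := by
  obtain ⟨hg0, -, ⟨z, hz, hgcd⟩, -⟩ := hg
  have hconst := (hC.mulVec_eq_zero_iff hsupp).1 hg0
  have habs : ∀ i, |g (e i)| = σ i * g (e i) := fun i => by
    have := hpos i
    rcases hC.sign_eq_one_or i with h | h <;> rw [h] at this ⊢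
    · rw [one_mul] at this ⊢; exact abs_of_pos this
    · rw [neg_one_mul] at this ⊢; exact abs_of_neg (neg_pos.mp this)
  -- `|z|` is constant on the cycle, so `z (e 0)` divides `gcd z = 1`.
  have hdvd : ∀ b, z (e 0) ∣ z b := fun b => by
    by_cases hb : b ∈ Set.range e
    · obtain ⟨i, rfl⟩ := hb
      rw [← abs_dvd_abs]
      refine dvd_of_eq (Int.cast_injective (α := ℝ) ?_)
      push_cast
      rw [hz, hz, habs, habs]
      exact (hconst i).symm
    · rw [show z b = 0 by exact_mod_cast (hz b).trans (hsupp b hb)]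
      exact dvd_zero _
  have hunit := isUnit_of_dvd_one (hgcd ▸ Finset.dvd_gcd fun b _ => hdvd b)
  have hone : σ 0 * g (e 0) = 1 := by
    rw [← habs, ← hz, ← Int.cast_abs, Int.isUnit_iff_abs_eq.mp hunit, Int.cast_one]
  intro i
  linear_combination σ i * (hconst i).trans hone - g (e i) * hC.sign_mul_self i

theorem exists_isOrientedCycle (hg : IsCircuit (incMat G) (boxB α) g) :
    ∃ (k : ℕ) (e : Fin (k + 1) → α) (v : Fin (k + 1) → N) (σ : Fin (k + 1) → ℝ),
      IsOrientedCycle G e v σ ∧ (∀ b ∉ Set.range e, g b = 0) ∧ ∀ i, g (e i) = σ i := by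
  obtain ⟨k, e, v, σ, hC, hpos⟩ := exists_isOrientedCycle_of_mulVec_eq_zero hg.1 hg.2.1
  have hsupp := hg.eq_zero_of_notMem_range hC fun i => right_ne_zero_of_mul (hpos i).ne'
  exact ⟨k, e, v, σ, hC, hsupp, hg.apply_eq_sign hC hsupp hpos⟩

theorem norm_eq_one (hg : IsCircuit (incMat G) (boxB α) g) : ‖g‖ = 1 := by
  obtain ⟨k, e, v, σ, hC, hsupp, hge⟩ := hg.exists_isOrientedCycle
  have hnorm : ∀ i, ‖g (e i)‖ = 1 := fun i => by
    rcases hC.sign_eq_one_or i with h | h <;> simp [hge, h]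
  refine le_antisymm ((pi_norm_le_iff_of_nonneg zero_le_one).2 fun b => ?_)
    (hnorm 0 ▸ norm_le_pi_norm g (e 0))
  by_cases hb : b ∈ Set.range e
  · obtain ⟨i, rfl⟩ := hb
    exact (hnorm i).le
  · simp [hsupp b hb]

theorem sum_le_card [Fintype N] (hg : IsCircuit (incMat G) (boxB α) g) :
    ∑ a, g a ≤ Fintype.card N := by
  obtain ⟨k, e, v, σ, hC, hsupp, hge⟩ := hg.exists_isOrientedCycle
  rw [← Fintype.sum_of_injective e hC.injective_arc σ g hsupp fun i => (hge i).symm]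
  exact hC.sum_sign_le_card

theorem exists_isHamiltonianDicycle [Fintype N] (hg : IsCircuit (incMat G) (boxB α) g)
    (h : ∑ a, g a = Fintype.card N) : ∃ S, IsHamiltonianDicycle G S ∧ g = S.indicator 1 := by
  obtain ⟨k, e, v, σ, hC, hsupp, hge⟩ := hg.exists_isOrientedCycle
  rw [← Fintype.sum_of_injective e hC.injective_arc σ g hsupp fun i => (hge i).symm] at h
  obtain ⟨hone, hS⟩ := hC.isHamiltonianDicycle_of_sum_sign_eq_card h
  refine ⟨_, hS, funext fun b => ?_⟩
  by_cases hb : b ∈ Set.range e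
  · obtain ⟨i, rfl⟩ := hb
    simp [hge, hone]
  · simp [hsupp b hb, hb]

end IsCircuit

namespace IsCircuitWalk

variable {x y : α → ℝ} {r : ℕ} {g : Fin r → α → ℝ} {lam : Fin r → ℝ}

theorem sum_norm_smul (hw : IsCircuitWalk (incMat G) 0 (boxB α) (boxd α) x y r g lam) :
    ∑ i, ‖lam i • g i‖ = ∑ i, lam i :=
  sum_congr rfl fun i _ => by
    rw [norm_smul, (hw.1 i).norm_eq_one, Real.norm_of_nonneg (hw.2.1 i).le, mul_one]

theorem lam_zero_eq_one {g : Fin (r + 1) → α → ℝ} {lam : Fin (r + 1) → ℝ}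
    (hw : IsCircuitWalk (incMat G) 0 (boxB α) (boxd α) 0 y (r + 1) g lam) {S : Set α}
    (hS : S.Nonempty) (hg : g 0 = S.indicator 1) : lam 0 = 1 := by
  obtain ⟨a, ha⟩ := hS
  have hle : lam 0 ≤ 1 := by
    simpa [hg, ha] using ((inPoly_circulation_iff.1 hw.inPoly_first).2 a).2
  refine hle.antisymm (not_lt.1 fun hlt => hw.not_inPoly_first hlt ?_)
  simpa [hg] using inPoly_indicator (hg ▸ (hw.1 0).1)

variable [Fintype N]

theorem sum_mul_card_sub_sum (hout : ∀ v, outDeg G v = 2)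
    (hw : IsCircuitWalk (incMat G) 0 (boxB α) (boxd α) 0 1 r g lam) :
    ∑ i, lam i * (Fintype.card N - ∑ a, g i a) = Fintype.card N * (∑ i, lam i - 2) := by
  have hflow : ∑ i, lam i * ∑ a, g i a = Fintype.card α := by
    simp_rw [mul_sum]
    rw [sum_comm]
    simpa [Finset.sum_apply] using congrArg (fun f => ∑ a, f a) hw.sum_smul_eq
  have hcard : (Fintype.card α : ℝ) = 2 * Fintype.card N := by
    rw [← sum_outDeg G]
    simp [hout, mul_comm]
  simp only [mul_sub, sum_sub_distrib, ← sum_mul, hflow, hcard]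
  ring

theorem two_le_sum [Nonempty N] (hout : ∀ v, outDeg G v = 2)
    (hw : IsCircuitWalk (incMat G) 0 (boxB α) (boxd α) 0 1 r g lam) : 2 ≤ ∑ i, lam i := by
  have hnonneg : 0 ≤ ∑ i, lam i * (Fintype.card N - ∑ a, g i a) :=
    sum_nonneg fun i _ => mul_nonneg (hw.2.1 i).le (sub_nonneg.2 (hw.1 i).sum_le_card)
  rw [hw.sum_mul_card_sub_sum hout, mul_nonneg_iff_of_pos_left (by positivity)] at hnonneg
  linarith

theorem sum_eq_card_of_sum_eq_two (hout : ∀ v, outDeg G v = 2)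
    (hw : IsCircuitWalk (incMat G) 0 (boxB α) (boxd α) 0 1 r g lam) (h : ∑ i, lam i = 2)
    (i : Fin r) : ∑ a, g i a = Fintype.card N := by
  have hnonneg : ∀ j ∈ univ, 0 ≤ lam j * (Fintype.card N - ∑ a, g j a) := fun j _ =>
    mul_nonneg (hw.2.1 j).le (sub_nonneg.2 (hw.1 j).sum_le_card)
  have hzero := (sum_eq_zero_iff_of_nonneg hnonneg).1
    (by rw [hw.sum_mul_card_sub_sum hout, h, sub_self, mul_zero]) i (mem_univ i)
  linarith [(mul_eq_zero.1 hzero).resolve_left (hw.2.1 i).ne']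

theorem decompTwoHamiltonian_of_sum_eq_two (hout : ∀ v, outDeg G v = 2)
    (hw : IsCircuitWalk (incMat G) 0 (boxB α) (boxd α) 0 1 r g lam) (hsum : ∑ i, lam i = 2) :
    DecompTwoHamiltonian G := by
  choose S hS hgS using fun i =>
    (hw.1 i).exists_isHamiltonianDicycle (hw.sum_eq_card_of_sum_eq_two hout hsum i)
  obtain _ | _ | r := r
  · simp at hsum
  · simp [hw.lam_zero_eq_one (hS 0).nonempty (hgS 0)] at hsum
  have hlam₀ := hw.lam_zero_eq_one (hS 0).nonempty (hgS 0)
  have hind : ∑ i, lam i • (S i).indicator (1 : α → ℝ) = 1 := by simpa [hgS] using hw.sum_smul_eq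
  have hdisj : Disjoint (S 0) (S 1) := disjoint_of_sum_smul_indicator_eq_one
    (fun i => (hw.2.1 i).le) hind (by simp) (by linarith [hw.2.1 1])
  have hcompl : S 1 = (S 0)ᶜ := by
    refine Set.eq_of_subset_of_ncard_le hdisj.subset_compl_left ?_
    have := Set.ncard_add_ncard_compl (S 0)
    rw [Nat.card_eq_fintype_card, ← sum_outDeg G] at this
    simp only [hout, sum_const, card_univ, smul_eq_mul, (hS 0).ncard_eq, (hS 1).ncard_eq] at this ⊢
    omega
  exact ⟨S 0, S 1, hS 0, hS 1, hdisj, by rw [hcompl, Set.union_compl_self]⟩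

end IsCircuitWalk

theorem isCircuitWalk_of_hamiltonian_partition (hG : ∀ v, inDeg G v = outDeg G v)
    {S₁ S₂ : Set α} (h₁ : IsHamiltonianDicycle G S₁) (h₂ : IsHamiltonianDicycle G S₂)
    (hdisj : Disjoint S₁ S₂) (hunion : S₁ ∪ S₂ = Set.univ) :
    IsCircuitWalk (incMat G) 0 (boxB α) (boxd α) 0 1 2
      ![S₁.indicator 1, S₂.indicator 1] ![1, 1] := by
  have hc₁ := h₁.isSimpleDicycle.isCircuit_indicator
  have hsum : (0 : α → ℝ) + (1 : ℝ) • S₁.indicator 1 + (1 : ℝ) • S₂.indicator 1 = 1 := by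
    funext a
    have h := congrFun (Set.indicator_union_of_disjoint hdisj (1 : α → ℝ)) a
    rw [hunion, Set.indicator_univ] at h
    simpa using h.symm
  obtain ⟨a₁, ha₁⟩ := h₁.nonempty
  obtain ⟨a₂, ha₂⟩ := h₂.nonempty
  refine isCircuitWalk_two hc₁ h₂.isSimpleDicycle.isCircuit_indicator one_pos one_pos
    (by simpa using inPoly_indicator hc₁.1) ?_ hsum
    (fun μ hμ => not_inPoly_of_one_lt (a := a₁) ?_) (fun μ hμ => not_inPoly_of_one_lt (a := a₂) ?_)
  · rw [hsum]
    exact inPoly_circulation_iff.2 ⟨incMat_mulVec_one hG, fun a => by simp⟩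
  · simpa [ha₁] using hμ
  · simpa [ha₂, Set.disjoint_right.1 hdisj ha₂] using hμ

end Digraph

theorem supnorm_distance_two_iff_two_hamiltonian_dicycles_general
    {N α : Type*} [Fintype N] [Fintype α] [DecidableEq N] [DecidableEq α]
    (G : Digraph' N α)
    (hdeg : ∀ v : N, inDeg G v = 2 ∧ outDeg G v = 2) :
    IsLeast {s : ℝ | ∃ (r : ℕ) (g : Fin r → α → ℝ) (lam : Fin r → ℝ),
        IsCircuitWalk (incMat G) 0 (boxB α) (boxd α) (0 : α → ℝ) (1 : α → ℝ) r g lam ∧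
        s = ∑ i, ‖lam i • g i‖} 2
      ↔ DecompTwoHamiltonian G := by
  have hout : ∀ v, outDeg G v = 2 := fun v => (hdeg v).2
  constructor
  · rintro ⟨⟨r, g, lam, hw, hs⟩, -⟩
    exact hw.decompTwoHamiltonian_of_sum_eq_two hout (by rw [← hw.sum_norm_smul, hs])
  · rintro ⟨S₁, S₂, h₁, h₂, hdisj, hunion⟩
    have : Nonempty N := let ⟨_, _, v, _⟩ := h₁; ⟨v 0⟩
    have hw := isCircuitWalk_of_hamiltonian_partition
      (fun v => (hdeg v).1.trans (hdeg v).2.symm) h₁ h₂ hdisj hunion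
    refine ⟨⟨2, _, _, hw, ?_⟩, fun s ⟨r, g, lam, hw', hs⟩ => ?_⟩
    · rw [hw.sum_norm_smul, Fin.sum_univ_two]
      norm_num
    · rw [hs, hw'.sum_norm_smul]
      exact hw'.two_le_sum hout

/-- For an Eulerian digraph `G` in which every node has in-degree `2` and
out-degree `2`: the minimum of `∑ ‖λᵢ gᵢ‖_∞` (the sup-norm on `ℝ^A`) over all circuit walks
from the zero flow to the full flow of the 0/1-circulation polytope equals `2` if and only if
`G` decomposes into two simple Hamiltonian dicycles. -/
theorem supnorm_distance_two_iff_two_hamiltonian_dicycles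
    {N α : Type*} [Fintype N] [Fintype α] [DecidableEq N] [DecidableEq α] [Nonempty N]
    (G : Digraph' N α)
    (hdeg : ∀ v : N, inDeg G v = 2 ∧ outDeg G v = 2) :
    IsLeast {s : ℝ | ∃ (r : ℕ) (g : Fin r → α → ℝ) (lam : Fin r → ℝ),
        IsCircuitWalk (incMat G) 0 (boxB α) (boxd α) (0 : α → ℝ) (1 : α → ℝ) r g lam ∧
        s = ∑ i, ‖lam i • g i‖} 2
      ↔ DecompTwoHamiltonian G :=
  supnorm_distance_two_iff_two_hamiltonian_dicycles_general G hdeg
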